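/- arXiv:2601.00752 — 3 statements merged into one kernel-verified Lean document; each statement's English description precedes it below -/
import Mathlib

section
/- Let A be a finite-dimensional Frobenius algebra over a field in which every right ideal is checkable (i.e., every right ideal is the right annihilator of a single element). Then every left ideal of A is principal. -/
open Module Submodule

section aux

variable {K A : Type*} [Field K] [AddCommGroup A] [Module K A] [FiniteDimensional K A]
  (B : A →ₗ[K] A →ₗ[K] K)

/-- finrank of a dual annihilator. -/
lemma aux_finrank_dualAnnihilator (W : Submodule K A) :
    finrank K W + finrank K W.dualAnnihilator = finrank K A := by
  have e : finrank K (A ⧸ W) = finrank K W.dualAnnihilator :=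
    (Subspace.quotEquivAnnihilator W).finrank_eq
  rw [← e, add_comm, Submodule.finrank_quotient_add_finrank]

lemma aux_finrank_comap (e : A ≃ₗ[K] Module.Dual K A) (U : Submodule K (Module.Dual K A)) :
    finrank K (U.comap (e : A →ₗ[K] Module.Dual K A)) = finrank K U := by
  rw [Submodule.comap_equiv_eq_map_symm]
  exact (LinearEquiv.finrank_map_eq _ _)

/-- Double orthogonal complement with respect to a nondegenerate bilinear form. -/
lemma aux_double_perp
    (hl : ∀ a : A, (∀ b : A, B a b = 0) → a = 0)
    (hr : ∀ b : A, (∀ a : A, B a b = 0) → b = 0)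
    (W : Submodule K A) :
    Submodule.comap B ((Submodule.comap B.flip W.dualAnnihilator).dualAnnihilator) = W := by
  have hBinj : Function.Injective B := by
    rw [injective_iff_map_eq_zero]
    intro a ha
    exact hl a fun b => by rw [ha]; rfl
  have hFinj : Function.Injective B.flip := by
    rw [injective_iff_map_eq_zero]
    intro b hb
    exact hr b fun a => by simpa using LinearMap.congr_fun hb a
  have hdim : finrank K A = finrank K (Module.Dual K A) := Subspace.dual_finrank_eq.symm
  have hBbij : Function.Bijective B :=
    ⟨hBinj, (LinearMap.injective_iff_surjective_of_finrank_eq_finrank hdim).mp hBinj⟩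
  have hFbij : Function.Bijective B.flip :=
    ⟨hFinj, (LinearMap.injective_iff_surjective_of_finrank_eq_finrank hdim).mp hFinj⟩
  set Wp : Submodule K A := Submodule.comap B.flip W.dualAnnihilator with hWp
  -- containment
  have hle : W ≤ Submodule.comap B Wp.dualAnnihilator := by
    intro w hw
    simp only [Submodule.mem_comap, Submodule.mem_dualAnnihilator]
    intro x hx
    rw [hWp, Submodule.mem_comap, Submodule.mem_dualAnnihilator] at hx
    exact hx w hw
  -- dimension count
  have h1 : finrank K Wp = finrank K W.dualAnnihilator := by
    rw [hWp]
    exact aux_finrank_comap (LinearEquiv.ofBijective B.flip hFbij) W.dualAnnihilator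
  have h2 : finrank K (Submodule.comap B Wp.dualAnnihilator) = finrank K Wp.dualAnnihilator :=
    aux_finrank_comap (LinearEquiv.ofBijective B hBbij) Wp.dualAnnihilator
  have h3 := aux_finrank_dualAnnihilator (K := K) W
  have h4 := aux_finrank_dualAnnihilator (K := K) Wp
  have hfr : finrank K (Submodule.comap B Wp.dualAnnihilator) ≤ finrank K W := by omega
  exact (Submodule.eq_of_le_of_finrank_le hle hfr).symm

end aux

theorem stmt8 {K A : Type*} [Field K] [Ring A] [Algebra K A] [FiniteDimensional K A]
    (hFrob : ∃ B : A →ₗ[K] A →ₗ[K] K,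
      (∀ a b c : A, B (a * b) c = B a (b * c)) ∧
      (∀ a : A, (∀ b : A, B a b = 0) → a = 0) ∧
      (∀ b : A, (∀ a : A, B a b = 0) → b = 0))
    (hcheck : ∀ I : AddSubgroup A, (∀ x ∈ I, ∀ r : A, x * r ∈ I) →
      ∃ v : A, ∀ x : A, x ∈ I ↔ v * x = 0) :
    ∀ L : Ideal A, ∃ v : A, L = Ideal.span {v} := by
  obtain ⟨B, hass, hl, hr⟩ := hFrob
  intro L
  -- the right annihilator of L, as an additive subgroup
  set I : AddSubgroup A :=
    { carrier := {x | ∀ l ∈ L, l * x = 0}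
      add_mem' := fun {a b} ha hb l hL => by rw [mul_add, ha l hL, hb l hL, add_zero]
      zero_mem' := fun l _ => mul_zero l
      neg_mem' := fun {a} ha l hL => by rw [mul_neg, ha l hL, neg_zero] } with hI
  have hIright : ∀ x ∈ I, ∀ r : A, x * r ∈ I := by
    intro x hx r l hL
    rw [← mul_assoc, hx l hL, zero_mul]
  obtain ⟨v, hv⟩ := hcheck I hIright
  refine ⟨v, ?_⟩
  -- right annihilators agree: Ann_r L = Ann_r (span {v})
  have hann : ∀ x : A, (∀ l ∈ L, l * x = 0) ↔ (∀ l ∈ Ideal.span {v}, l * x = 0) := by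
    intro x
    constructor
    · intro h l hl
      obtain ⟨a, rfl⟩ := Ideal.mem_span_singleton'.mp hl
      have hvx : v * x = 0 := (hv x).mp h
      rw [mul_assoc, hvx, mul_zero]
    · intro h
      exact (hv x).mpr (h v (Ideal.mem_span_singleton_self v))
  -- for a left ideal J, the B-right-orthogonal of J equals Ann_r J
  have hperp : ∀ J : Ideal A, ∀ x : A,
      x ∈ Submodule.comap B.flip (J.restrictScalars K).dualAnnihilator ↔ ∀ l ∈ J, l * x = 0 := by
    intro J x
    simp only [Submodule.mem_comap, Submodule.mem_dualAnnihilator,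
      Submodule.restrictScalars_mem, LinearMap.flip_apply]
    constructor
    · intro h l hl
      refine hr _ (fun a => ?_)
      rw [← hass a l x]
      exact h (a * l) (J.mul_mem_left a hl)
    · intro h l hl
      have h1 : B (1 * l) x = B 1 (l * x) := hass 1 l x
      rw [one_mul, h l hl, map_zero] at h1
      exact h1.trans (by simp)
  have hperps : Submodule.comap B.flip (L.restrictScalars K).dualAnnihilator
      = Submodule.comap B.flip ((Ideal.span {v}).restrictScalars K).dualAnnihilator := by
    ext x
    rw [hperp L, hperp (Ideal.span {v})]
    exact hann x
  have hL := aux_double_perp B hl hr (L.restrictScalars K)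
  have hS := aux_double_perp B hl hr ((Ideal.span {v}).restrictScalars K)
  rw [hperps, hS] at hL
  apply SetLike.ext
  intro x
  rw [← Submodule.restrictScalars_mem K L x, ← Submodule.restrictScalars_mem K (Ideal.span {v}) x,
    hL]
end

section
/- Let R be a finite-dimensional G-graded K-algebra over a field K, with G a finite group and grading R = ⊕_{g∈G} R_g where each component has dimension 1 and the product of nonzero homogeneous elements is nonzero. Let 0 ≠ f ∈ R with support S = supp(f) ⊆ G (the set of g with nonzero g-component). If there exists a sequence g_1,...,g_t in G of right S-rank t, then dim_K(f·R) ≥ t. -/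
/-!
Right multiplication by a basis element `b h` moves the coordinate at `x * h⁻¹` to `x`, up to a
nonzero scalar, so the support of `f * b h` is `S * {h}`. The right `S`-rank condition then gives,
for each `i`, a coordinate at which `f * b (g i)` is nonzero while all earlier `f * b (g j)` vanish.
Such a triangular family is linearly independent, and it lies in `f R`.
-/

open Pointwise

/-- A sequence `g 0, …, g (t-1)` in `G` has right `S`-rank `t` if for every
`i ≥ 1` (i.e. the 2nd through `t`-th terms), `S · g i` is not contained in
`⋃_{j < i} S · g j`. -/
def RightSRankSeq {G : Type*} [Group G] (S : Set G) {t : ℕ} (g : Fin t → G) : Prop :=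
  ∀ i : Fin t, 0 < (i : ℕ) →
    ¬ (S * {g i} ⊆ ⋃ j : Fin t, ⋃ (_ : (j : ℕ) < (i : ℕ)), S * {g j})

theorem linearIndependent_of_dual_triangular {ι R M : Type*} [LinearOrder ι] [Ring R]
    [NoZeroDivisors R] [AddCommGroup M] [Module R M] (v : ι → M) (φ : ι → M →ₗ[R] R)
    (hdiag : ∀ i, φ i (v i) ≠ 0) (htri : ∀ i j, j < i → φ i (v j) = 0) :
    LinearIndependent R v := by
  classical
  rw [linearIndependent_iff']
  intro s a hsum i hi
  by_contra hai
  set T := s.filter (a · ≠ 0)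
  have hT : T.Nonempty := ⟨i, Finset.mem_filter.mpr ⟨hi, hai⟩⟩
  obtain ⟨hms, ham⟩ := Finset.mem_filter.mp (T.max'_mem hT)
  set m := T.max' hT
  have hφ := congrArg (φ m) hsum
  rw [map_sum, map_zero, Finset.sum_eq_single_of_mem m hms] at hφ
  · exact ham ((mul_eq_zero.mp (by simpa using hφ)).resolve_right (hdiag m))
  intro j hjs hjm
  rcases hjm.lt_or_gt with hlt | hgt
  · rw [map_smul, htri m j hlt, smul_zero]
  · have : a j = 0 := by
      by_contra haj
      exact (T.le_max' j (Finset.mem_filter.mpr ⟨hjs, haj⟩)).not_gt hgt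
    rw [this, zero_smul, map_zero]

theorem Module.Basis.linearIndependent_of_support_not_subset {ι G R M : Type*} [LinearOrder ι]
    [Ring R] [NoZeroDivisors R] [AddCommGroup M] [Module R M] (b : Module.Basis G R M)
    (v : ι → M) (hv : ∀ i, ¬ {x | b.repr (v i) x ≠ 0} ⊆ ⋃ j < i, {x | b.repr (v j) x ≠ 0}) :
    LinearIndependent R v := by
  choose x hx hxj using fun i => Set.not_subset.mp (hv i)
  refine linearIndependent_of_dual_triangular v (fun i => b.coord (x i)) hx fun i j hji => ?_
  by_contra hne
  exact hxj i (Set.mem_iUnion₂.mpr ⟨j, hji, by simpa using hne⟩)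

theorem Module.Basis.repr_mul_basis_apply {G K R : Type*} [CommSemiring K] [Semiring R]
    [Algebra K R] [Group G] (b : Module.Basis G K R) (c : G → G → K)
    (hc : ∀ g h, b g * b h = c g h • b (g * h)) (f : R) (h x : G) :
    b.repr (f * b h) x = c (x * h⁻¹) h * b.repr f (x * h⁻¹) := by
  have key : Finsupp.lapply x ∘ₗ b.repr.toLinearMap ∘ₗ LinearMap.mulRight K (b h) =
      c (x * h⁻¹) h • (Finsupp.lapply (x * h⁻¹) ∘ₗ b.repr.toLinearMap) := by
    refine b.ext fun s => ?_
    by_cases hs : s = x * h⁻¹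
    · subst hs
      simp [hc]
    · have : s * h ≠ x := fun h' => hs (by rw [← h']; group)
      simp [hc, hs, this]
  simpa using LinearMap.congr_fun key f

theorem Module.Basis.support_repr_mul_basis {G K R : Type*} [CommSemiring K] [NoZeroDivisors K]
    [Semiring R] [Algebra K R] [Group G] (b : Module.Basis G K R) (c : G → G → K)
    (hc : ∀ g h, b g * b h = c g h • b (g * h)) (hc0 : ∀ g h, c g h ≠ 0) (f : R) (h : G) :
    {x | b.repr (f * b h) x ≠ 0} = {x | b.repr f x ≠ 0} * {h} := by
  ext x
  simp [b.repr_mul_basis_apply c hc, hc0]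

/-- A `G`-graded `K`-algebra `R` whose homogeneous components are one-dimensional
and in which products of nonzero homogeneous elements are nonzero is presented by
a basis `b : G → R` together with `b g * b h = c • b (g*h)` for units `c`.
For `f ∈ R`, its support is `{g | b.repr f g ≠ 0}`, and if there is a sequence of
right `S`-rank `t` for `S = supp f`, then `dim_K (f · R) ≥ t`. -/
theorem stmt14 {K R G : Type*} [Field K] [Ring R] [Algebra K R] [Group G] [Finite G]
    (b : Module.Basis G K R)
    (hmul : ∀ g h : G, ∃ c : Kˣ, b g * b h = (c : K) • b (g * h))
    (f : R) (hf : f ≠ 0)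
    {t : ℕ} (g : Fin t → G)
    (hrank : RightSRankSeq {x : G | b.repr f x ≠ 0} g) :
    t ≤ Module.finrank K (Submodule.span K {y : R | ∃ r : R, y = f * r}) := by
  choose c hc using hmul
  have hsupp := b.support_repr_mul_basis (fun g h => c g h) hc (fun g h => (c g h).ne_zero) f
  have hS : {x : G | b.repr f x ≠ 0}.Nonempty :=
    DFunLike.ne_iff.mp (b.repr.map_ne_zero_iff.mpr hf)
  have hli : LinearIndependent K fun i => f * b (g i) := by
    refine b.linearIndependent_of_support_not_subset _ fun i => ?_
    simp only [hsupp]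
    rcases Nat.eq_zero_or_pos i with hi | hi
    · intro hsub
      obtain ⟨y, hy⟩ := hS.mul (Set.singleton_nonempty (g i))
      simpa [Fin.lt_def, hi] using hsub hy
    · exact hrank i hi
  have : Module.Finite K R := Module.Finite.of_basis b
  calc t = Module.finrank K (Submodule.span K (Set.range fun i => f * b (g i))) := by
        rw [finrank_span_eq_card hli, Fintype.card_fin]
    _ ≤ _ := Submodule.finrank_mono (Submodule.span_mono (by rintro _ ⟨i, rfl⟩; exact ⟨_, rfl⟩))
end

section
/- Let G be a finite group, S ⊆ G with 1 ∈ S, and suppose every maximal right S-rank sequence in G has length exactly t = |G|/|S| (in particular |S| divides |G| and any t cosets-like translates S·g_1,...,S·g_t covering G are pairwise disjoint). If s ∈ S satisfies S·s ⊄ S, then there exists a right S-rank sequence of length strictly greater than |G|/|S|. Consequently, if the maximal right S-rank length equals |G|/|S| and 1 ∈ S, then S·S ⊆ S and S is a subgroup of G. -/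
open Pointwise

-- helper: unions over snoc indices agree with unions over original indices
lemma snoc_union_eq {G : Type*} [Group G] (S : Set G) {r : ℕ} (g : Fin r → G) (x : G)
    (m : ℕ) (hm : m ≤ r) :
    (⋃ j : Fin (r+1), ⋃ (_ : (j : ℕ) < m), S * {(Fin.snoc g x : Fin (r+1) → G) j}) =
    ⋃ j : Fin r, ⋃ (_ : (j : ℕ) < m), S * {g j} := by
  ext y
  simp only [Set.mem_iUnion]
  constructor
  · rintro ⟨j, hj, hy⟩
    have hjr : (j : ℕ) < r := lt_of_lt_of_le hj hm
    refine ⟨⟨j, hjr⟩, hj, ?_⟩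
    have : (Fin.snoc g x : Fin (r+1) → G) j = g ⟨j, hjr⟩ := by
      have h2 : j = Fin.castSucc ⟨j, hjr⟩ := by ext; simp
      exact (congrArg (Fin.snoc g x) h2).trans (Fin.snoc_castSucc ..)
    rwa [this] at hy
  · rintro ⟨j, hj, hy⟩
    refine ⟨Fin.castSucc j, hj, ?_⟩
    rwa [Fin.snoc_castSucc]

theorem stmt17 {G : Type*} [Group G] [Finite G] (S : Set G) (hone : (1 : G) ∈ S)
    (hlen : ∀ (r : ℕ) (g : Fin r → G), RightSRankSeq S g →
      (∀ x : G, ¬ RightSRankSeq S (Fin.snoc g x)) → r * Nat.card S = Nat.card G) :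
    (∀ s ∈ S, ¬ S * {s} ⊆ S →
      ∃ (r : ℕ) (g : Fin r → G), RightSRankSeq S g ∧ Nat.card G < r * Nat.card S) ∧
    S * S ⊆ S ∧ ∃ H : Subgroup G, (H : Set G) = S := by
  classical
  have := Fintype.ofFinite G
  have hGpos : 0 < Nat.card G := Nat.card_pos
  -- key contradiction
  have key : ∀ s ∈ S, ¬ S * {s} ⊆ S → False := by
    intro s hs hns
    -- s ≠ 1
    have hs1 : s ≠ 1 := by
      rintro rfl
      exact hns (by simp)
    -- property Φ
    set Φ : ℕ → Prop := fun r => ∃ g : Fin r → G, RightSRankSeq S g ∧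
      (∃ i, g i = 1) ∧ (∃ j, g j = s) with hΦ
    -- Φ is bounded
    have hbound : ∀ r, Φ r → r ≤ Nat.card G + 1 := by
      intro r ⟨g, hg, _⟩
      by_contra h
      push_neg at h
      have hr2 : 2 ≤ r := by omega
      -- pick witnesses
      have hw : ∀ k : Fin (r-1), ∃ a, a ∈ S * {g ⟨(k:ℕ)+1, by omega⟩} ∧
          a ∉ ⋃ j : Fin r, ⋃ (_ : (j:ℕ) < (k:ℕ)+1), S * {g j} := by
        intro k
        have := hg ⟨(k:ℕ)+1, by omega⟩ (by simp)
        exact Set.not_subset.mp this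
      choose w hw1 hw2 using hw
      have hinj : Function.Injective w := by
        intro k k' hkk
        by_contra hne
        rcases lt_or_gt_of_ne (fun h : (k:ℕ) = (k':ℕ) => hne (Fin.ext h)) with h | h
        · exact hw2 k' (Set.mem_iUnion.mpr ⟨⟨(k:ℕ)+1, by omega⟩,
            Set.mem_iUnion.mpr ⟨by simp; omega, hkk ▸ hw1 k⟩⟩)
        · exact hw2 k (Set.mem_iUnion.mpr ⟨⟨(k':ℕ)+1, by omega⟩,
            Set.mem_iUnion.mpr ⟨by simp; omega, hkk ▸ hw1 k'⟩⟩)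
      have := Nat.card_le_card_of_injective w hinj
      rw [Nat.card_eq_fintype_card (α := Fin (r-1)), Fintype.card_fin] at this
      omega
    -- Φ 2 holds
    have hΦ2 : Φ 2 := by
      refine ⟨![1, s], ?_, ⟨0, rfl⟩, ⟨1, rfl⟩⟩
      intro i hi hsub
      have hi1 : i = 1 := by omega
      subst hi1
      apply hns
      intro y hy
      have := hsub hy
      simp only [Set.mem_iUnion] at this
      obtain ⟨j, hj, hyj⟩ := this
      have hj0 : j = 0 := by
        have : (j:ℕ) < 1 := hj
        omega
      subst hj0
      simpa using hyj
    -- maximal R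
    set R := Nat.findGreatest Φ (Nat.card G + 1) with hR
    have hΦR : Φ R := Nat.findGreatest_spec (P := Φ) (by omega) hΦ2
    have hRmax : ¬ Φ (R + 1) := by
      intro h
      have hle : R + 1 ≤ Nat.card G + 1 := hbound _ h
      exact Nat.findGreatest_is_greatest (P := Φ) (by omega) hle h
    clear_value R
    obtain ⟨g, hg, ⟨i₀, hi₀⟩, ⟨j₀, hj₀⟩⟩ := hΦR
    -- maximality of g as a RightSRankSeq
    have hmax : ∀ x : G, ¬ RightSRankSeq S (Fin.snoc g x) := by
      intro x hx
      exact hRmax ⟨Fin.snoc g x, hx,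
        ⟨Fin.castSucc i₀, by rwa [Fin.snoc_castSucc]⟩,
        ⟨Fin.castSucc j₀, by rwa [Fin.snoc_castSucc]⟩⟩
    have hcard : R * Nat.card S = Nat.card G := hlen R g hg hmax
    -- covering
    have hcover : ∀ y : G, y ∈ ⋃ j : Fin R, S * {g j} := by
      intro y
      have := hmax y
      rw [RightSRankSeq] at this
      push_neg at this
      obtain ⟨i, hi, hsub⟩ := this
      rcases lt_or_eq_of_le (Nat.lt_succ_iff.mp i.isLt) with h | h
      · -- contradiction with hg
        exfalso
        apply hg ⟨(i:ℕ), h⟩ hi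
        have heq : (Fin.snoc g y : Fin (R+1) → G) i = g ⟨(i:ℕ), h⟩ := by
          have h2 : i = Fin.castSucc ⟨(i:ℕ), h⟩ := by ext; simp
          exact (congrArg (Fin.snoc g y) h2).trans (Fin.snoc_castSucc ..)
        rw [snoc_union_eq S g y (i:ℕ) (le_of_lt h), heq] at hsub
        exact hsub
      · -- i is last
        have heq : (Fin.snoc g y : Fin (R+1) → G) i = y := by
          have h2 : i = Fin.last R := by ext; simp [h]
          exact (congrArg (Fin.snoc g y) h2).trans (Fin.snoc_last ..)
        rw [snoc_union_eq S g y (i:ℕ) (le_of_eq h), heq] at hsub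
        have hy : y ∈ S * {y} := ⟨1, hone, y, rfl, one_mul y⟩
        have := hsub hy
        simp only [Set.mem_iUnion] at this
        obtain ⟨j, hj, hyj⟩ := this
        exact Set.mem_iUnion.mpr ⟨j, hyj⟩
    -- counting
    have hi₀j₀ : i₀ ≠ j₀ := fun h => hs1 (by rw [← hj₀, ← h, hi₀])
    set A : Fin R → Finset G := fun j => (S * {g j}).toFinset with hA
    have hAcard : ∀ j, (A j).card = Nat.card S := by
      intro j
      have : S * {g j} = (fun a => a * g j) '' S := by
        ext y; simp [Set.mem_mul]
      rw [hA]
      simp only [this, Set.toFinset_image]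
      rw [Finset.card_image_of_injective _ (mul_left_injective (g j))]
      rw [Nat.card_coe_set_eq, Set.ncard_eq_toFinset_card']
    set B : Fin R → Finset G := fun j => if j = j₀ then A j \ {s} else A j with hB
    have hBle : ∀ j, (B j).card ≤ (A j).card := by
      intro j
      by_cases h : j = j₀
      · simp only [hB, if_pos h]
        exact Finset.card_le_card (Finset.sdiff_subset)
      · simp only [hB, if_neg h]
        exact le_refl _
    have hsA : s ∈ A j₀ := by
      rw [hA, Set.mem_toFinset, hj₀]
      exact ⟨1, hone, s, rfl, one_mul s⟩
    have hBlt : (B j₀).card < (A j₀).card := by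
      simp only [hB, if_pos]
      exact Finset.card_lt_card (Finset.sdiff_ssubset (by simpa using hsA) (by simp))
    have hcoverB : ∀ y : G, ∃ j, y ∈ B j := by
      intro y
      by_cases hys : y = s
      · refine ⟨i₀, ?_⟩
        simp only [hB, if_neg hi₀j₀, hA, Set.mem_toFinset, hi₀, hys]
        exact ⟨s, hs, 1, rfl, mul_one s⟩
      · obtain ⟨j, hj⟩ := Set.mem_iUnion.mp (hcover y)
        refine ⟨j, ?_⟩
        by_cases h : j = j₀
        · simp only [hB, if_pos h, Finset.mem_sdiff, Finset.mem_singleton]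
          exact ⟨Set.mem_toFinset.mpr hj, hys⟩
        · simp only [hB, if_neg h]
          exact Set.mem_toFinset.mpr hj
    -- |G| ≤ Σ |B j| < Σ |A j| = R * |S| = |G|, contradiction
    have h1 : Nat.card G ≤ ∑ j : Fin R, (B j).card := by
      rw [Nat.card_eq_fintype_card, ← Finset.card_univ]
      calc Finset.univ.card ≤ (Finset.univ.biUnion B).card := by
            apply Finset.card_le_card
            intro y _
            obtain ⟨j, hj⟩ := hcoverB y
            exact Finset.mem_biUnion.mpr ⟨j, Finset.mem_univ j, hj⟩
        _ ≤ ∑ j : Fin R, (B j).card := Finset.card_biUnion_le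
    have h2 : ∑ j : Fin R, (B j).card < ∑ j : Fin R, (A j).card :=
      Finset.sum_lt_sum (fun j _ => hBle j) ⟨j₀, Finset.mem_univ j₀, hBlt⟩
    have h3 : ∑ j : Fin R, (A j).card = R * Nat.card S := by
      simp [hAcard, Finset.sum_const, mul_comm]
    omega
  -- assemble
  have hmulsub : S * S ⊆ S := by
    rintro x ⟨a, ha, b, hb, rfl⟩
    by_cases h : S * {b} ⊆ S
    · exact h ⟨a, ha, b, rfl, rfl⟩
    · exact absurd (key b hb h) (by simp)
  refine ⟨fun s hs hns => absurd (key s hs hns) (by simp), hmulsub, ?_⟩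
  have hSS : S * S = S := le_antisymm hmulsub (fun x hx => ⟨x, hx, 1, hone, mul_one x⟩)
  exact ⟨subgroupOfIdempotent S ⟨1, hone⟩ hSS, rfl⟩
end
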